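/- Let V be a finite nonempty set of n vertices and S : V → V → ℝ a symmetric, nonnegative separation function with S v v = 0. Then for every valid assignment C : V → ℝ, the chain of lower bounds S_min(V, S) ≤ H(S) ≤ R(C) holds: the minimum spanning tree weight of the complete weighted graph (V, S) is at most the minimum Hamiltonian path cost, which is at most the range of any valid assignment. -/

import Mathlib

open Finset

variable {V : Type*}

/-- Cost of the Hamiltonian path ordering `h : Fin n ≃ V`:
`Σ_{k=0}^{n-2} S (h k) (h (k+1))`. -/
noncomputable def hamCost (n : ℕ) (S : V → V → ℝ) (h : Fin n ≃ V) : ℝ :=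
  ∑ k : Fin (n - 1),
    S (h ⟨(k : ℕ), by have := k.isLt; omega⟩) (h ⟨(k : ℕ) + 1, by have := k.isLt; omega⟩)

/-- `H(S)`: the minimum Hamiltonian path cost over all bijections `Fin n ≃ V`. -/
noncomputable def hamMin (V : Type*) (n : ℕ) (S : V → V → ℝ) : ℝ :=
  sInf (Set.range fun h : Fin n ≃ V => hamCost n S h)

-- Total weight (w.r.t. the symmetric weight function `S`) of the edges of a
-- graph `T` on `V`: each unordered edge `{x, y}` contributes `S x y` once
-- (note `S` is symmetric, hence the division by 2).
open Classical in
noncomputable def graphWeight [Fintype V] (S : V → V → ℝ) (T : SimpleGraph V) : ℝ :=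
  (∑ x : V, ∑ y : V, if T.Adj x y then S x y else 0) / 2

/-- Minimum total weight over all spanning trees of the complete weighted graph
`(V, S)`; a spanning tree of the complete graph on `V` is precisely a simple
graph on `V` that is a tree (connected and acyclic). -/
noncomputable def mstMin (V : Type*) [Fintype V] (S : V → V → ℝ) : ℝ :=
  sInf {w : ℝ | ∃ T : SimpleGraph V, T.IsTree ∧ graphWeight S T = w}

/-- An assignment is valid if `|C x − C y| ≥ S x y` for all distinct `x, y`. -/
def IsValidAssignment (S : V → V → ℝ) (C : V → ℝ) : Prop :=
  ∀ x y : V, x ≠ y → S x y ≤ |C x - C y|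

/-- Range of an assignment: max value minus min value. -/
noncomputable def rangeOf [Fintype V] [Nonempty V] (C : V → ℝ) : ℝ :=
  univ.sup' univ_nonempty C - univ.inf' univ_nonempty C

/-!
Sorting the vertices by `C` gives a Hamiltonian path each of whose edges costs at most the gap
between consecutive values of `C`, and these gaps telescope to at most the range of `C`.
Every Hamiltonian path, read as a graph, is a spanning tree of the same weight, so the minimum
spanning tree weight is at most `H(S)`.
-/

namespace SimpleGraph

lemma pathGraph_isAcyclic (n : ℕ) : (pathGraph n).IsAcyclic := by
  refine isAcyclic_iff_forall_adj_isBridge.2 fun v w hvw ↦ ?_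
  wlog hlt : v.val + 1 = w.val generalizing v w
  · rw [Sym2.eq_swap]
    exact this _ _ hvw.symm ((pathGraph_adj.1 hvw).resolve_left hlt)
  rintro ⟨p⟩
  -- a walk from `v` to `w` avoiding the edge would have to cross the cut `{a | a ≤ v}` elsewhere
  obtain ⟨d, -, hd, hd'⟩ := p.exists_boundary_dart {a | a ≤ v} (show v ≤ v from le_rfl)
    (show ¬ w ≤ v by rw [Fin.le_def]; omega)
  have hadj := d.adj
  simp only [deleteEdges_adj, Set.mem_singleton_iff, pathGraph_adj] at hadj
  simp only [Set.mem_ofPred_eq, Fin.le_def, not_le] at hd hd'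
  have hdv : d.fst = v := Fin.ext (by omega)
  have hdw : d.snd = w := Fin.ext (by omega)
  exact hadj.2 (by rw [hdv, hdw]) |>.elim

lemma pathGraph_isTree (n : ℕ) : (pathGraph (n + 1)).IsTree :=
  ⟨pathGraph_connected n, pathGraph_isAcyclic _⟩

end SimpleGraph

lemma Fin.sum_univ_succ_sub_castSucc {M : Type*} [AddCommGroup M] (m : ℕ) (f : Fin (m + 1) → M) :
    ∑ k : Fin m, (f k.succ - f k.castSucc) = f (Fin.last m) - f 0 := by
  induction m with
  | zero => simp
  | succ m ih =>
    have hinit := ih (f ∘ Fin.castSucc)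
    simp only [Function.comp_apply, Fin.castSucc_zero, ← Fin.succ_castSucc] at hinit
    rw [Fin.sum_univ_castSucc, hinit, Fin.succ_last]
    abel

lemma hamCost_succ (m : ℕ) (S : V → V → ℝ) (h : Fin (m + 1) ≃ V) :
    hamCost (m + 1) S h = ∑ k : Fin m, S (h k.castSucc) (h k.succ) := rfl

lemma isTree_map_pathGraph (m : ℕ) (h : Fin (m + 1) ≃ V) :
    ((SimpleGraph.pathGraph (m + 1)).map h.toEmbedding).IsTree :=
  (SimpleGraph.Iso.map h _).isTree_iff.1 (SimpleGraph.pathGraph_isTree m)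

section graphWeight

variable [Fintype V]

lemma graphWeight_map_equiv {W : Type*} [Fintype W] (S : V → V → ℝ) (G : SimpleGraph W)
    (e : W ≃ V) :
    graphWeight S (G.map e.toEmbedding) = graphWeight (fun a b ↦ S (e a) (e b)) G := by
  have hadj (a b : W) : (G.map e.toEmbedding).Adj (e a) (e b) ↔ G.Adj a b :=
    SimpleGraph.map_adj_apply
  simp only [graphWeight, ← e.sum_comp]
  congr 1
  exact Finset.sum_congr rfl fun a _ ↦ Finset.sum_congr rfl fun b _ ↦ by
    split_ifs <;> simp_all

lemma graphWeight_pathGraph (m : ℕ) (w : Fin (m + 1) → Fin (m + 1) → ℝ)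
    (hw : ∀ i j, w i j = w j i) :
    graphWeight w (SimpleGraph.pathGraph (m + 1)) = ∑ k : Fin m, w k.castSucc k.succ := by
  classical
  have hforward : ∑ i, ∑ j, (if i.val + 1 = j.val then w i j else 0) =
      ∑ k : Fin m, w k.castSucc k.succ := by
    rw [Fin.sum_univ_castSucc]
    have hlast (j : Fin (m + 1)) : (Fin.last m).val + 1 ≠ j.val := by simp; omega
    have hsucc (k : Fin m) (j : Fin (m + 1)) : k.castSucc.val + 1 = j.val ↔ k.succ = j := by
      simp [Fin.ext_iff]
    simp only [hlast, hsucc, if_false, Finset.sum_const_zero, add_zero, Finset.sum_ite_eq,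
      Finset.mem_univ, if_true]
  have hsplit : ∀ i j, (if (SimpleGraph.pathGraph (m + 1)).Adj i j then w i j else 0) =
      (if i.val + 1 = j.val then w i j else 0) + (if j.val + 1 = i.val then w i j else 0) := by
    intro i j
    rw [SimpleGraph.pathGraph_adj]
    split_ifs <;> first | omega | simp
  have hbackward : ∑ i, ∑ j, (if j.val + 1 = i.val then w i j else 0) =
      ∑ i, ∑ j, (if i.val + 1 = j.val then w i j else 0) := by
    rw [Finset.sum_comm]
    exact Finset.sum_congr rfl fun i _ ↦ Finset.sum_congr rfl fun j _ ↦ by rw [hw]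
  rw [graphWeight]
  simp only [hsplit, Finset.sum_add_distrib, hbackward, hforward]
  ring

lemma graphWeight_map_pathGraph {S : V → V → ℝ} (hsymm : ∀ x y, S x y = S y x) (m : ℕ)
    (h : Fin (m + 1) ≃ V) :
    graphWeight S ((SimpleGraph.pathGraph (m + 1)).map h.toEmbedding) = hamCost (m + 1) S h := by
  rw [graphWeight_map_equiv, graphWeight_pathGraph _ _ fun i j ↦ hsymm _ _, hamCost_succ]

lemma mstMin_le_hamCost {S : V → V → ℝ} (hsymm : ∀ x y, S x y = S y x) (m : ℕ)
    (h : Fin (m + 1) ≃ V) : mstMin V S ≤ hamCost (m + 1) S h := by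
  have hbdd : BddBelow {w : ℝ | ∃ T : SimpleGraph V, T.IsTree ∧ graphWeight S T = w} :=
    ((Set.finite_range (graphWeight S)).subset (by rintro _ ⟨T, -, rfl⟩; exact ⟨T, rfl⟩)).bddBelow
  exact csInf_le hbdd ⟨_, isTree_map_pathGraph m h, graphWeight_map_pathGraph hsymm m h⟩

lemma mstMin_le_hamMin {S : V → V → ℝ} (hsymm : ∀ x y, S x y = S y x) (m : ℕ)
    [Nonempty (Fin (m + 1) ≃ V)] : mstMin V S ≤ hamMin V (m + 1) S :=
  le_csInf (Set.range_nonempty _) (Set.forall_mem_range.2 (mstMin_le_hamCost hsymm m))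

end graphWeight

lemma hamMin_le_hamCost [Finite V] {n : ℕ} (S : V → V → ℝ) (h : Fin n ≃ V) :
    hamMin V n S ≤ hamCost n S h :=
  csInf_le (Set.finite_range _).bddBelow ⟨h, rfl⟩

lemma exists_equiv_monotone_comp {α : Type*} [LinearOrder α] {n : ℕ} (e : Fin n ≃ V)
    (C : V → α) : ∃ h : Fin n ≃ V, Monotone (C ∘ h) :=
  ⟨(Tuple.sort (C ∘ e)).trans e, fun _ _ hab ↦ Tuple.monotone_sort (C ∘ e) hab⟩

lemma hamCost_le_of_monotone {S : V → V → ℝ} {C : V → ℝ} (hC : IsValidAssignment S C) {m : ℕ}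
    (h : Fin (m + 1) ≃ V) (hmono : Monotone (C ∘ h)) :
    hamCost (m + 1) S h ≤ C (h (Fin.last m)) - C (h 0) := calc
  hamCost (m + 1) S h ≤ ∑ k : Fin m, (C (h k.succ) - C (h k.castSucc)) := by
    rw [hamCost_succ]
    refine Finset.sum_le_sum fun k _ ↦ ?_
    have hlt : k.castSucc < k.succ := Fin.castSucc_lt_succ
    have hle : C (h k.castSucc) ≤ C (h k.succ) := hmono hlt.le
    calc S (h k.castSucc) (h k.succ) ≤ |C (h k.castSucc) - C (h k.succ)| :=
          hC _ _ (h.injective.ne hlt.ne)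
      _ = C (h k.succ) - C (h k.castSucc) := by
          rw [abs_sub_comm, abs_of_nonneg (sub_nonneg.2 hle)]
  _ = C (h (Fin.last m)) - C (h 0) := Fin.sum_univ_succ_sub_castSucc m (C ∘ h)

lemma hamCost_le_rangeOf [Fintype V] [Nonempty V] {S : V → V → ℝ} {C : V → ℝ}
    (hC : IsValidAssignment S C) {m : ℕ} (h : Fin (m + 1) ≃ V) (hmono : Monotone (C ∘ h)) :
    hamCost (m + 1) S h ≤ rangeOf C :=
  (hamCost_le_of_monotone hC h hmono).trans
    (sub_le_sub (le_sup' C (mem_univ _)) (inf'_le C (mem_univ _)))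

theorem mst_le_hamMin_le_range_general
    [Fintype V] [Nonempty V] (n : ℕ) (hcard : Fintype.card V = n)
    (S : V → V → ℝ)
    (hsymm : ∀ x y : V, S x y = S y x) :
    ∀ C : V → ℝ, IsValidAssignment S C →
      mstMin V S ≤ hamMin V n S ∧ hamMin V n S ≤ rangeOf C := by
  intro C hC
  obtain ⟨m, rfl⟩ : ∃ m, n = m + 1 := Nat.exists_eq_add_one.2 (hcard ▸ Fintype.card_pos)
  obtain ⟨h, hmono⟩ := exists_equiv_monotone_comp (Fintype.equivFinOfCardEq hcard).symm C
  have : Nonempty (Fin (m + 1) ≃ V) := ⟨h⟩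
  exact ⟨mstMin_le_hamMin hsymm m, (hamMin_le_hamCost S h).trans (hamCost_le_rangeOf hC h hmono)⟩

theorem mst_le_hamMin_le_range
    [Fintype V] [Nonempty V] (n : ℕ) (hn : 0 < n) (hcard : Fintype.card V = n)
    (S : V → V → ℝ)
    (hsymm : ∀ x y : V, S x y = S y x)
    (hnonneg : ∀ x y : V, 0 ≤ S x y)
    (hdiag : ∀ v : V, S v v = 0) :
    ∀ C : V → ℝ, IsValidAssignment S C →
      mstMin V S ≤ hamMin V n S ∧ hamMin V n S ≤ rangeOf C :=
  mst_le_hamMin_le_range_general n hcard S hsymm
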